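/- For the skyline diagram D(α) of a composition α, the quantity 1 + Σ_{inv_1} (α_{i_2}−α_{i_1}) + Σ_{inv_2} (α_{i_2}−α_{i_3})(α_{i_3}−α_{i_1}) + Σ_{inv_3} (α_{i_2}−α_{i_1})(α_{i_4}−α_{i_3}) equals 1 + r_1(D(α)) + r_2(D(α)) + r_3(D(α)), where inv_1(α) = {(i_1,i_2) : i_1 < i_2, α_{i_1} < α_{i_2}}, inv_2(α) = {(i_1,i_2,i_3) : i_1 < i_2 < i_3, α_{i_1} < α_{i_3} < α_{i_2}}, inv_3(α) = {(i_1,i_2,i_3,i_4) : i_1 < i_2 < i_3 < i_4, α_{i_1} < α_{i_2}, α_{i_3} < α_{i_4}}. -/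
import Mathlib


/-- Box `(i,j)` (0-indexed) belongs to the skyline diagram `D(α)` iff `j < α i`. -/
def skyline {n : ℕ} (α : Fin n → ℕ) (i j : Fin n) : Prop := (j : ℕ) < α i

instance {n : ℕ} (α : Fin n → ℕ) (i j : Fin n) : Decidable (skyline α i j) := by
  unfold skyline; infer_instance

/-- `r₁`: number of configurations (A) (a blank box above a filled box in a column). -/
def r1 {n : ℕ} (D : Fin n → Fin n → Prop) [∀ i j, Decidable (D i j)] : ℕ :=
  ((Finset.univ : Finset (Fin n × Fin n × Fin n)).filter fun t =>
    t.1 < t.2.1 ∧ ¬ D t.1 t.2.2 ∧ D t.2.1 t.2.2).card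

/-- `r₂`: number of configurations (B)/(B'): rows `i₁<i₂<i₃`, columns `j₁<j₂`, top
row both blank, middle row both filled, bottom row exactly one filled. -/
def r2 {n : ℕ} (D : Fin n → Fin n → Prop) [∀ i j, Decidable (D i j)] : ℕ :=
  ((Finset.univ : Finset (Fin n × Fin n × Fin n × Fin n × Fin n)).filter fun t =>
    t.1 < t.2.1 ∧ t.2.1 < t.2.2.1 ∧ t.2.2.2.1 < t.2.2.2.2 ∧
    ¬ D t.1 t.2.2.2.1 ∧ ¬ D t.1 t.2.2.2.2 ∧
    D t.2.1 t.2.2.2.1 ∧ D t.2.1 t.2.2.2.2 ∧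
    ((D t.2.2.1 t.2.2.2.1 ∧ ¬ D t.2.2.1 t.2.2.2.2) ∨
     (¬ D t.2.2.1 t.2.2.2.1 ∧ D t.2.2.1 t.2.2.2.2))).card

/-- `r₃`: number of configurations (C)/(C')/(C''): rows `i₁<i₂<i₃<i₄`, columns
`j₁, j₂` (any order, possibly equal), `(i₁,j₁),(i₃,j₂)` blank, `(i₂,j₁),(i₄,j₂)` filled. -/
def r3 {n : ℕ} (D : Fin n → Fin n → Prop) [∀ i j, Decidable (D i j)] : ℕ :=
  ((Finset.univ : Finset ((Fin n × Fin n × Fin n × Fin n) × Fin n × Fin n)).filter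
    fun t =>
      t.1.1 < t.1.2.1 ∧ t.1.2.1 < t.1.2.2.1 ∧ t.1.2.2.1 < t.1.2.2.2 ∧
      ¬ D t.1.1 t.2.1 ∧ D t.1.2.1 t.2.1 ∧
      ¬ D t.1.2.2.1 t.2.2 ∧ D t.1.2.2.2 t.2.2).card

lemma card_Ico_fin {n a b : ℕ} (hb : b ≤ n) :
    ((Finset.univ : Finset (Fin n)).filter fun j : Fin n => a ≤ (j:ℕ) ∧ (j:ℕ) < b).card = b - a := by
  rw [← Nat.card_Ico a b]
  apply Finset.card_bij (fun (j : Fin n) (_ : j ∈ _) => (j:ℕ))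
  · intro j hj; simp at hj ⊢; omega
  · intro j1 _ j2 _ h; exact Fin.val_injective h
  · intro m hm; simp at hm
    exact ⟨⟨m, lt_of_lt_of_le hm.2 hb⟩, by simp; omega, rfl⟩

lemma card_pair_fin {n a b c d : ℕ} (hb : b ≤ n) (hd : d ≤ n) :
    ((Finset.univ : Finset (Fin n × Fin n)).filter fun j =>
      (a ≤ (j.1:ℕ) ∧ (j.1:ℕ) < b) ∧ (c ≤ (j.2:ℕ) ∧ (j.2:ℕ) < d)).card
      = (b - a) * (d - c) := by
  rw [← Finset.univ_product_univ,
    Finset.filter_product (fun x : Fin n => a ≤ (x:ℕ) ∧ (x:ℕ) < b)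
      (fun x : Fin n => c ≤ (x:ℕ) ∧ (x:ℕ) < d),
    Finset.card_product, card_Ico_fin hb, card_Ico_fin hd]

lemma key1 {n : ℕ} (α : Fin n → ℕ) (hα : ∀ i, α i ≤ n) (i1 i2 : Fin n) :
    (∑ j : Fin n, if i1 < i2 ∧ ¬ skyline α i1 j ∧ skyline α i2 j then 1 else 0)
    = if i1 < i2 then α i2 - α i1 else 0 := by
  rw [← Finset.card_filter]
  by_cases h : i1 < i2
  · rw [if_pos h, ← card_Ico_fin (a := α i1) (hα i2)]
    congr 1
    apply Finset.filter_congr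
    intro j _
    simp [skyline, h]
  · rw [if_neg h]
    rw [Finset.card_eq_zero, Finset.filter_eq_empty_iff]
    intro j _
    tauto

lemma r1_eq {n : ℕ} (α : Fin n → ℕ) (hα : ∀ i, α i ≤ n) :
    r1 (skyline α) = ∑ p ∈ (Finset.univ : Finset (Fin n × Fin n)).filter
      (fun p => p.1 < p.2 ∧ α p.1 < α p.2), (α p.2 - α p.1) := by
  rw [r1, Finset.card_filter]
  simp only [Fintype.sum_prod_type]
  simp only [key1 α hα]
  rw [Finset.sum_filter, Fintype.sum_prod_type]
  apply Finset.sum_congr rfl; intro i1 _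
  apply Finset.sum_congr rfl; intro i2 _
  split_ifs with h1 h2 h2
  · rfl
  · have : ¬ α i1 < α i2 := fun hc => h2 ⟨h1, hc⟩
    omega
  · exact absurd h2.1 h1
  · rfl

lemma key2 {n : ℕ} (α : Fin n → ℕ) (hα : ∀ i, α i ≤ n) (i1 i2 i3 : Fin n) :
    (∑ j1 : Fin n, ∑ j2 : Fin n, if i1 < i2 ∧ i2 < i3 ∧ j1 < j2 ∧
      ¬ skyline α i1 j1 ∧ ¬ skyline α i1 j2 ∧
      skyline α i2 j1 ∧ skyline α i2 j2 ∧
      ((skyline α i3 j1 ∧ ¬ skyline α i3 j2) ∨ (¬ skyline α i3 j1 ∧ skyline α i3 j2))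
      then 1 else 0)
    = if i1 < i2 ∧ i2 < i3 then (α i3 - α i1) * (α i2 - α i3) else 0 := by
  rw [← Finset.sum_product', Finset.univ_product_univ, ← Finset.card_filter]
  by_cases h : i1 < i2 ∧ i2 < i3
  · rw [if_pos h, ← card_pair_fin (a := α i1) (c := α i3) (hα i3) (hα i2)]
    congr 1
    apply Finset.filter_congr
    intro j _
    simp only [skyline, h.1, h.2, Fin.lt_def, true_and, not_lt]
    omega
  · rw [if_neg h, Finset.card_eq_zero, Finset.filter_eq_empty_iff]
    intro j _
    tauto

lemma key3 {n : ℕ} (α : Fin n → ℕ) (hα : ∀ i, α i ≤ n) (i1 i2 i3 i4 : Fin n) :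
    (∑ j1 : Fin n, ∑ j2 : Fin n, if i1 < i2 ∧ i2 < i3 ∧ i3 < i4 ∧
      ¬ skyline α i1 j1 ∧ skyline α i2 j1 ∧ ¬ skyline α i3 j2 ∧ skyline α i4 j2
      then 1 else 0)
    = if i1 < i2 ∧ i2 < i3 ∧ i3 < i4 then (α i2 - α i1) * (α i4 - α i3) else 0 := by
  rw [← Finset.sum_product', Finset.univ_product_univ, ← Finset.card_filter]
  by_cases h : i1 < i2 ∧ i2 < i3 ∧ i3 < i4
  · rw [if_pos h, ← card_pair_fin (a := α i1) (c := α i3) (hα i2) (hα i4)]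
    congr 1
    apply Finset.filter_congr
    intro j _
    simp only [skyline, h.1, h.2.1, h.2.2, true_and, not_lt]
    omega
  · rw [if_neg h, Finset.card_eq_zero, Finset.filter_eq_empty_iff]
    intro j _
    tauto

lemma r2_eq {n : ℕ} (α : Fin n → ℕ) (hα : ∀ i, α i ≤ n) :
    r2 (skyline α) = ∑ p ∈ (Finset.univ : Finset (Fin n × Fin n × Fin n)).filter
      (fun p => p.1 < p.2.1 ∧ p.2.1 < p.2.2 ∧ α p.1 < α p.2.2 ∧ α p.2.2 < α p.2.1),
      (α p.2.1 - α p.2.2) * (α p.2.2 - α p.1) := by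
  rw [r2, Finset.card_filter]
  simp only [Fintype.sum_prod_type]
  simp only [key2 α hα]
  rw [Finset.sum_filter]
  simp only [Fintype.sum_prod_type]
  apply Finset.sum_congr rfl; intro i1 _
  apply Finset.sum_congr rfl; intro i2 _
  apply Finset.sum_congr rfl; intro i3 _
  split_ifs with h1 h2 h2
  · ring
  · push_neg at h2
    have := h2 h1.1 h1.2
    have : (α i3 - α i1) * (α i2 - α i3) = 0 := by
      rcases Nat.eq_zero_or_pos (α i3 - α i1) with h | h
      · rw [h, zero_mul]
      · have : α i2 - α i3 = 0 := by omega
        rw [this, mul_zero]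
    exact this
  · exact absurd ⟨h2.1, h2.2.1⟩ h1
  · rfl

lemma r3_eq {n : ℕ} (α : Fin n → ℕ) (hα : ∀ i, α i ≤ n) :
    r3 (skyline α) = ∑ q ∈ (Finset.univ : Finset (Fin n × Fin n × Fin n × Fin n)).filter
      (fun q => q.1 < q.2.1 ∧ q.2.1 < q.2.2.1 ∧ q.2.2.1 < q.2.2.2 ∧
        α q.1 < α q.2.1 ∧ α q.2.2.1 < α q.2.2.2),
      (α q.2.1 - α q.1) * (α q.2.2.2 - α q.2.2.1) := by
  rw [r3, Finset.card_filter]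
  simp only [Fintype.sum_prod_type]
  simp only [key3 α hα]
  rw [Finset.sum_filter]
  simp only [Fintype.sum_prod_type]
  apply Finset.sum_congr rfl; intro i1 _
  apply Finset.sum_congr rfl; intro i2 _
  apply Finset.sum_congr rfl; intro i3 _
  apply Finset.sum_congr rfl; intro i4 _
  split_ifs with h1 h2 h2
  · rfl
  · push_neg at h2
    have h3 := h2 h1.1 h1.2.1 h1.2.2
    have : (α i2 - α i1) * (α i4 - α i3) = 0 := by
      rcases Nat.eq_zero_or_pos (α i2 - α i1) with h | h
      · rw [h, zero_mul]
      · have : α i4 - α i3 = 0 := by omega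
        rw [this, mul_zero]
    exact this
  · exact absurd ⟨h2.1, h2.2.1, h2.2.2.1⟩ h1
  · rfl

/-- For the skyline diagram of `α` (parts at most `n`),
`1 + Σ_{inv₁}(α_{i₂}−α_{i₁}) + Σ_{inv₂}(α_{i₂}−α_{i₃})(α_{i₃}−α_{i₁})
   + Σ_{inv₃}(α_{i₂}−α_{i₁})(α_{i₄}−α_{i₃}) = 1 + r₁(D(α)) + r₂(D(α)) + r₃(D(α))`. -/
theorem skyline_bound_eq {n : ℕ} (α : Fin n → ℕ) (hα : ∀ i, α i ≤ n) :
    1 + (∑ p ∈ (Finset.univ : Finset (Fin n × Fin n)).filter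
          (fun p => p.1 < p.2 ∧ α p.1 < α p.2), (α p.2 - α p.1))
      + (∑ p ∈ (Finset.univ : Finset (Fin n × Fin n × Fin n)).filter
          (fun p => p.1 < p.2.1 ∧ p.2.1 < p.2.2 ∧ α p.1 < α p.2.2 ∧ α p.2.2 < α p.2.1),
          (α p.2.1 - α p.2.2) * (α p.2.2 - α p.1))
      + (∑ q ∈ (Finset.univ : Finset (Fin n × Fin n × Fin n × Fin n)).filter
          (fun q => q.1 < q.2.1 ∧ q.2.1 < q.2.2.1 ∧ q.2.2.1 < q.2.2.2 ∧
            α q.1 < α q.2.1 ∧ α q.2.2.1 < α q.2.2.2),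
          (α q.2.1 - α q.1) * (α q.2.2.2 - α q.2.2.1))
    = 1 + r1 (skyline α) + r2 (skyline α) + r3 (skyline α) := by
  rw [r1_eq α hα, r2_eq α hα, r3_eq α hα]
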